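/- For all nonnegative integers N and a, p(2N - 2a - 1, 4, N) - p(2N - 2a - 2, 4, N) = p(N - a - 2, 3) - p(N - 2a - 2, 3). -/

import Mathlib

/-- `pBdd n m N` is the number of partitions of `n` into at most `m` parts,
each part at most `N`; it is `0` for negative `n`. -/
noncomputable def pBdd (n : ℤ) (m N : ℕ) : ℕ :=
  if 0 ≤ n then
    Nat.card {π : Nat.Partition n.toNat //
      Multiset.card π.parts ≤ m ∧ ∀ i ∈ π.parts, i ≤ N}
  else 0

/-- `pAtMost n m` is the number of partitions of `n` into at most `m` parts;
it is `0` for negative `n`. -/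
noncomputable def pAtMost (n : ℤ) (m : ℕ) : ℕ :=
  if 0 ≤ n then
    Nat.card {π : Nat.Partition n.toNat // Multiset.card π.parts ≤ m}
  else 0

/-!
Write `p_N(n) = p(n, 4, N)` and `t(n) = p(n, 3)`. Removing one largest part `N + 1` gives
`p_{N+1}(n) = p_N(n) + t(n - N - 1)` for `n ≤ 2N + 2`, where the bound `N + 1` on the remaining
at most three parts is vacuous because they sum to at most `N + 1`. Complementing inside the
`4 × N` box gives `p_N(n) = p_N(4N - n)`. Together these yield `p_N(2N - 1) = p_N(2N - 2)` by
induction on `N` in steps of two, which is the case `a = 0`; the recursion alone then passes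
from `(N, a)` to `(N + 1, a + 1)`.
-/

open Finset

theorem Fin.antitone_cons {α : Type*} [Preorder α] {n : ℕ} {a : α} {f : Fin n → α} :
    Antitone (Fin.cons a f : Fin (n + 1) → α) ↔ (∀ i, f i ≤ a) ∧ Antitone f :=
  antitone_iff_forall_lt.trans <|
    (Fin.liftFun_cons (· ≥ ·)).trans (and_congr Iff.rfl antitone_iff_forall_lt.symm)

/-- Partitions into at most `m` parts, sorted and padded with zeros, are antitone `m`-tuples;
on tuples the box complement is simply `x ↦ N - x ∘ rev`. -/
def antitoneTuples (n m N : ℕ) : Finset (Fin m → ℕ) :=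
  {x ∈ Fintype.piFinset fun _ => Iic N | Antitone x ∧ ∑ i, x i = n}

theorem mem_antitoneTuples {n m N : ℕ} {x : Fin m → ℕ} :
    x ∈ antitoneTuples n m N ↔ (∀ i, x i ≤ N) ∧ Antitone x ∧ ∑ i, x i = n := by
  simp [antitoneTuples]

theorem card_antitoneTuples_zero (m N : ℕ) : #(antitoneTuples 0 m N) = 1 := by
  rw [card_eq_one]
  refine ⟨fun _ => 0, eq_singleton_iff_unique_mem.2 ⟨?_, fun x hx => ?_⟩⟩
  · simp [mem_antitoneTuples, antitone_const]
  · obtain ⟨-, -, hsum⟩ := mem_antitoneTuples.1 hx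
    simpa [funext_iff] using hsum

theorem card_antitoneTuples_eq_zero_of_lt {n m N : ℕ} (h : m * N < n) :
    #(antitoneTuples n m N) = 0 := by
  refine card_eq_zero.2 (eq_empty_of_forall_notMem fun x hx => ?_)
  obtain ⟨hle, -, hsum⟩ := mem_antitoneTuples.1 hx
  have : n ≤ m * N := calc
    n = ∑ i, x i := hsum.symm
    _ ≤ ∑ _ : Fin m, N := sum_le_sum fun i _ => hle i
    _ = m * N := by simp
  omega

theorem cons_mem_antitoneTuples {n m N a : ℕ} {y : Fin m → ℕ} :
    Fin.cons a y ∈ antitoneTuples n (m + 1) N ↔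
      a ≤ N ∧ (∀ i, y i ≤ a) ∧ Antitone y ∧ a + ∑ i, y i = n := by
  simp only [mem_antitoneTuples, Fin.forall_fin_succ, Fin.cons_zero, Fin.cons_succ,
    Fin.antitone_cons, Fin.sum_cons]
  constructor
  · rintro ⟨⟨haN, -⟩, hy, hsum⟩
    exact ⟨haN, hy.1, hy.2, hsum⟩
  · rintro ⟨haN, hya, hy, hsum⟩
    exact ⟨⟨haN, fun i => (hya i).trans haN⟩, ⟨hya, hy⟩, hsum⟩

theorem card_antitoneTuples_succ_bound (n m N : ℕ) :
    #(antitoneTuples n (m + 1) (N + 1)) =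
      #(antitoneTuples n (m + 1) N) +
        if N + 1 ≤ n then #(antitoneTuples (n - (N + 1)) m (N + 1)) else 0 := by
  rw [← card_filter_add_card_filter_not (p := fun x => x 0 ≤ N)]
  congr 1
  · congr 1
    ext x
    simp only [mem_filter, mem_antitoneTuples]
    constructor
    · rintro ⟨⟨-, hx, hsum⟩, h0⟩
      exact ⟨fun i => (hx (Fin.zero_le i)).trans h0, hx, hsum⟩
    · rintro ⟨hle, hx, hsum⟩
      exact ⟨⟨fun i => (hle i).trans N.le_succ, hx, hsum⟩, hle 0⟩
  have head_eq {x} (hx : x ∈ {x ∈ antitoneTuples n (m + 1) (N + 1) | ¬x 0 ≤ N}) :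
      x 0 = N + 1 := by
    rw [mem_filter, mem_antitoneTuples] at hx
    exact le_antisymm (hx.1.1 0) (not_le.1 hx.2)
  split_ifs with h
  · refine card_nbij' Fin.tail (Fin.cons (α := fun _ => ℕ) (N + 1)) (fun x hx => ?_)
      (fun y hy => ?_) (fun x hx => ?_) (fun y _ => Fin.tail_cons _ _)
    · have h0 := head_eq hx
      rw [mem_coe, mem_filter, ← Fin.cons_self_tail x, cons_mem_antitoneTuples, h0] at hx
      obtain ⟨⟨-, hle, htail, hsum⟩, -⟩ := hx
      exact mem_antitoneTuples.2 ⟨hle, htail, by omega⟩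
    · obtain ⟨hle, hy, hsum⟩ := mem_antitoneTuples.1 hy
      simp only [coe_filter, Set.mem_ofPred_eq, cons_mem_antitoneTuples, Fin.cons_zero]
      exact ⟨⟨le_rfl, hle, hy, by omega⟩, by omega⟩
    · simp [← head_eq hx]
  · refine card_eq_zero.2 (filter_eq_empty_iff.2 fun x hx hx0 => h ?_)
    obtain ⟨-, -, hsum⟩ := mem_antitoneTuples.1 hx
    exact not_le.1 hx0 |>.trans_le <|
      hsum ▸ single_le_sum (fun i _ => Nat.zero_le (x i)) (mem_univ 0)

theorem card_antitoneTuples_symm {n m N : ℕ} (h : n ≤ m * N) :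
    #(antitoneTuples n m N) = #(antitoneTuples (m * N - n) m N) := by
  let c : (Fin m → ℕ) → Fin m → ℕ := fun x i => N - x i.rev
  have hmaps : ∀ {k}, k ≤ m * N →
      Set.MapsTo c (antitoneTuples k m N) (antitoneTuples (m * N - k) m N) := by
    intro k hk x hx
    rw [mem_coe, mem_antitoneTuples] at *
    obtain ⟨hle, hx, hsum⟩ := hx
    refine ⟨fun i => Nat.sub_le _ _,
      fun i j hij => Nat.sub_le_sub_left (hx (Fin.rev_le_rev.2 hij)) _, ?_⟩
    have : ∑ i, c x i = ∑ i, (N - x i) := Fintype.sum_equiv Fin.revPerm _ _ fun _ => rfl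
    rw [this, sum_tsub_distrib _ fun i _ => hle i, hsum]
    simp
  have hinv : ∀ {k}, Set.LeftInvOn c c (antitoneTuples k m N) := by
    intro k x hx
    rw [mem_coe, mem_antitoneTuples] at hx
    funext i
    simp [c, Nat.sub_sub_self (hx.1 i)]
  refine card_nbij' c c (hmaps h) ?_ hinv hinv
  simpa [Nat.sub_sub_self h] using hmaps (k := m * N - n) (by omega)

def boundedPartitions (n m N : ℕ) : Finset n.Partition :=
  {π | Multiset.card π.parts ≤ m ∧ ∀ i ∈ π.parts, i ≤ N}

theorem mem_boundedPartitions {n m N : ℕ} {π : n.Partition} :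
    π ∈ boundedPartitions n m N ↔
      Multiset.card π.parts ≤ m ∧ ∀ i ∈ π.parts, i ≤ N := by
  simp [boundedPartitions]

theorem card_boundedPartitions_zero (m N : ℕ) : #(boundedPartitions 0 m N) = 1 := by
  rw [card_eq_one]
  refine ⟨default, eq_singleton_iff_unique_mem.2 ⟨?_, fun π _ => Subsingleton.elim _ _⟩⟩
  simp [boundedPartitions]

theorem card_boundedPartitions_eq_zero_of_lt {n m N : ℕ} (h : m * N < n) :
    #(boundedPartitions n m N) = 0 := by
  refine card_eq_zero.2 (filter_eq_empty_iff.2 fun π _ ⟨hcard, hle⟩ => ?_)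
  have : n ≤ m * N := calc
    n = π.parts.sum := π.parts_sum.symm
    _ ≤ Multiset.card π.parts * N := by simpa using Multiset.sum_le_card_nsmul _ _ hle
    _ ≤ m * N := Nat.mul_le_mul_right N hcard
  omega

theorem boundedPartitions_of_le {n m N : ℕ} (h : n ≤ N) :
    boundedPartitions n m N = ({π | Multiset.card π.parts ≤ m} : Finset n.Partition) :=
  filter_congr fun _ _ => and_iff_left fun _ hi => (Nat.Partition.le_of_mem_parts hi).trans h

theorem card_boundedPartitions_succ_bound (n m N : ℕ) :
    #(boundedPartitions n (m + 1) (N + 1)) =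
      #(boundedPartitions n (m + 1) N) +
        if N + 1 ≤ n then #(boundedPartitions (n - (N + 1)) m (N + 1)) else 0 := by
  rw [← card_filter_add_card_filter_not (p := fun π => N + 1 ∈ π.parts), add_comm]
  congr 1
  · congr 1
    ext π
    simp only [mem_filter, mem_boundedPartitions]
    constructor
    · rintro ⟨⟨hcard, hle⟩, hN⟩
      exact ⟨hcard, fun i hi =>
        Nat.le_of_lt_succ <| (hle i hi).lt_of_ne (ne_of_mem_of_not_mem hi hN)⟩
    · rintro ⟨hcard, hle⟩
      exact ⟨⟨hcard, fun i hi => (hle i hi).trans N.le_succ⟩,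
        fun hN => by simpa using hle _ hN⟩
  split_ifs with h
  · let e := Nat.Partition.partitionWithPartEquiv N.succ_pos h
    refine card_bij' (fun π hπ => e ⟨π, (mem_filter.1 hπ).2⟩) (fun q _ => (e.symm q).1)
      (fun π hπ => ?_) (fun q hq => ?_) (fun π _ => by simp) (fun q _ => by simp)
    · rw [mem_filter, mem_boundedPartitions] at hπ
      obtain ⟨⟨hcard, hle⟩, hN⟩ := hπ
      rw [mem_boundedPartitions, Nat.Partition.partitionWithPartEquiv_apply_parts,
        Multiset.card_erase_of_mem hN, Nat.pred_eq_sub_one]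
      exact ⟨by omega, fun i hi => hle i (Multiset.mem_of_mem_erase hi)⟩
    · simpa [mem_boundedPartitions, e] using hq
  · refine card_eq_zero.2 (filter_eq_empty_iff.2 fun π _ hN => h ?_)
    exact Nat.Partition.le_of_mem_parts hN

theorem card_boundedPartitions_eq_card_antitoneTuples (n m N : ℕ) :
    #(boundedPartitions n m N) = #(antitoneTuples n m N) := by
  have base {n m N : ℕ} (h : m * N = 0) :
      #(boundedPartitions n m N) = #(antitoneTuples n m N) := by
    rcases Nat.eq_zero_or_pos n with rfl | hn
    · rw [card_boundedPartitions_zero, card_antitoneTuples_zero]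
    · rw [card_boundedPartitions_eq_zero_of_lt (h ▸ hn),
        card_antitoneTuples_eq_zero_of_lt (h ▸ hn)]
  induction m generalizing n N with
  | zero => exact base (zero_mul N)
  | succ m ihm =>
    induction N generalizing n with
    | zero => exact base (mul_zero _)
    | succ N ihN =>
      rw [card_boundedPartitions_succ_bound, card_antitoneTuples_succ_bound, ihN, ihm]

theorem pBdd_natCast (n m N : ℕ) : pBdd n m N = #(boundedPartitions n m N) := by
  simp [pBdd, boundedPartitions, Nat.card_eq_fintype_card, Fintype.card_subtype]

theorem pBdd_of_neg {n : ℤ} (h : n < 0) (m N : ℕ) : pBdd n m N = 0 :=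
  if_neg h.not_ge

theorem pAtMost_natCast (n m : ℕ) : pAtMost n m = #(boundedPartitions n m n) := by
  simp [pAtMost, boundedPartitions_of_le le_rfl, Nat.card_eq_fintype_card, Fintype.card_subtype]

theorem pAtMost_of_neg {n : ℤ} (h : n < 0) (m : ℕ) : pAtMost n m = 0 :=
  if_neg h.not_ge

theorem pBdd_succ_bound {n : ℤ} {m N : ℕ} (h : n ≤ 2 * N + 2) :
    pBdd n (m + 1) (N + 1) = pBdd n (m + 1) N + pAtMost (n - N - 1) m := by
  rcases lt_or_ge n 0 with hn | hn
  · simp [pBdd_of_neg hn, pAtMost_of_neg (by omega : n - N - 1 < 0)]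
  lift n to ℕ using hn
  rw [pBdd_natCast, pBdd_natCast, card_boundedPartitions_succ_bound]
  split_ifs with hN
  · obtain ⟨k, rfl⟩ := Nat.exists_eq_add_of_le hN
    have hk : ((N + 1 + k : ℕ) : ℤ) - N - 1 = k := by push_cast; ring
    rw [hk, pAtMost_natCast, Nat.add_sub_cancel_left, boundedPartitions_of_le le_rfl,
      boundedPartitions_of_le (by omega : k ≤ N + 1)]
  · rw [pAtMost_of_neg (by omega), add_zero]

theorem pBdd_symm (n : ℤ) (m N : ℕ) : pBdd n m N = pBdd ((m * N : ℕ) - n) m N := by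
  rcases lt_or_ge n 0 with hn | hn
  · lift (m * N : ℕ) - n to ℕ using (by omega) with k hk
    rw [pBdd_of_neg hn, pBdd_natCast, card_boundedPartitions_eq_zero_of_lt (by omega)]
  lift n to ℕ using hn
  rcases lt_or_ge (m * N) n with hmn | hmn
  · rw [pBdd_natCast, card_boundedPartitions_eq_zero_of_lt hmn, pBdd_of_neg (by omega)]
  rw [← Nat.cast_sub hmn, pBdd_natCast, pBdd_natCast,
    card_boundedPartitions_eq_card_antitoneTuples, card_boundedPartitions_eq_card_antitoneTuples,
    card_antitoneTuples_symm hmn]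

theorem pBdd_four_two_mul_sub_one (N : ℕ) : pBdd (2 * N - 1) 4 N = pBdd (2 * N - 2) 4 N := by
  induction N using Nat.twoStepInduction with
  | zero => simp [pBdd_of_neg]
  | one =>
    have h1 := pBdd_succ_bound (m := 3) (N := 0) (n := 1) (by omega)
    have h0 := pBdd_succ_bound (m := 3) (N := 0) (n := 0) (by omega)
    have e1 : pBdd 1 4 0 = 0 := by
      simpa using (pBdd_natCast 1 4 0).trans (card_boundedPartitions_eq_zero_of_lt (by simp))
    have e2 : pAtMost 0 3 = 1 := by
      simpa using (pAtMost_natCast 0 3).trans (card_boundedPartitions_zero 3 0)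
    have e3 : pBdd 0 4 0 = 1 := by
      simpa using (pBdd_natCast 0 4 0).trans (card_boundedPartitions_zero 4 0)
    norm_num [pAtMost_of_neg] at h1 h0 ⊢
    omega
  | more M ih _ =>
    -- Lower `N` twice by the recursion and reflect at levels `M + 1` and `M`: the claim becomes
    -- `ih`, and the `p(·, 3)` terms cancel in pairs.
    have h1 := pBdd_succ_bound (m := 3) (N := M + 1) (n := 2 * M + 3) (by omega)
    have h2 := pBdd_succ_bound (m := 3) (N := M + 1) (n := 2 * M + 2) (by omega)
    have h3 := pBdd_symm (2 * M + 3) 4 (M + 1)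
    have h4 := pBdd_succ_bound (m := 3) (N := M) (n := 2 * M + 1) (by omega)
    have h5 := pBdd_succ_bound (m := 3) (N := M) (n := 2 * M + 2) (by omega)
    have h6 := pBdd_symm (2 * M + 1) 4 M
    have h7 := pBdd_symm (2 * M + 2) 4 M
    push_cast at *
    ring_nf at *
    omega

theorem stmt14 (N a : ℕ) :
    (pBdd (2 * (N : ℤ) - 2 * a - 1) 4 N : ℤ) - pBdd (2 * (N : ℤ) - 2 * a - 2) 4 N =
      (pAtMost ((N : ℤ) - a - 2) 3 : ℤ) - pAtMost ((N : ℤ) - 2 * a - 2) 3 := by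
  induction a generalizing N with
  | zero =>
    simpa [sub_eq_zero] using pBdd_four_two_mul_sub_one N
  | succ a ih =>
    cases N with
    | zero =>
      simp (disch := omega) only [pBdd_of_neg, pAtMost_of_neg]
    | succ M =>
      have h1 := pBdd_succ_bound (m := 3) (N := M) (n := 2 * M - 2 * a - 1) (by omega)
      have h2 := pBdd_succ_bound (m := 3) (N := M) (n := 2 * M - 2 * a - 2) (by omega)
      have hih := ih M
      push_cast at *
      ring_nf at *
      omega
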